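/- arXiv:1502.05366 — 4 statements merged into one kernel-verified Lean document; each statement's English description precedes it below -/
import Mathlib

section
/- (Eckart–Young, spectral norm) Let A be an m×n real matrix with singular values σ_1 ≥ … ≥ σ_r. For any m×n real matrix B of rank at most k < r, ‖A − B‖₂ ≥ σ_{k+1}. -/
/-!
Let `P` consist of the first `k + 1` columns of `V`. Since `rank (B * P) ≤ k < k + 1`, some
`d ≠ 0` has `B (P d) = 0`. For `x = P d` we get `‖x‖ = ‖d‖` and
`(A - B) x = A x = U (σ₁ d₁, …, σₖ₊₁ dₖ₊₁, 0, …, 0)`, whose norm is at least `σₖ₊₁ ‖d‖`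
because the singular values decrease.
-/

open Matrix

/-- The spectral (operator ℓ²) norm of a real matrix. -/
noncomputable def specNorm {m n : Type*} [Fintype m] [Fintype n] [DecidableEq n]
    (A : Matrix m n ℝ) : ℝ :=
  @norm _ Matrix.instL2OpNormedAddCommGroup.toNorm A

open scoped Matrix.Norms.L2Operator

namespace Matrix

variable {l m n o : Type*}

theorem exists_mulVec_eq_zero_of_rank_lt {K : Type*} [Field K] [Fintype n] (M : Matrix m n K)
    (h : M.rank < Fintype.card n) : ∃ v ≠ 0, M *ᵥ v = 0 := by
  by_contra! hinj
  have hM : Function.Injective M.mulVecLin :=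
    (injective_iff_map_eq_zero M.mulVecLin).2 fun v hv => by_contra (hinj v · hv)
  refine h.ne ?_
  rw [rank, LinearMap.finrank_range_of_inj hM, Module.finrank_fintype_fun_eq_card]

section Orthonormal

variable {R : Type*} [CommSemiring R] [Fintype m] [DecidableEq n]

theorem dotProduct_mulVec_self_of_transpose_mul_self_eq_one [Fintype n] {U : Matrix m n R}
    (hU : Uᵀ * U = 1) (v : n → R) : U *ᵥ v ⬝ᵥ U *ᵥ v = v ⬝ᵥ v := by
  rw [dotProduct_mulVec, ← mulVec_transpose, mulVec_mulVec, hU, one_mulVec]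

theorem transpose_mul_self_submatrix_eq_one [DecidableEq l] {U : Matrix m n R}
    (hU : Uᵀ * U = 1) {e : l → n} (he : Function.Injective e) :
    (U.submatrix id e)ᵀ * U.submatrix id e = 1 := by
  rw [transpose_submatrix, ← submatrix_mul _ _ _ _ _ Function.bijective_id, hU,
    submatrix_one _ he]

end Orthonormal

theorem mul_submatrix_eq_of_eq_mul_diagonal_mul_transpose {R : Type*} [CommSemiring R]
    [Fintype n] [Fintype l] [Fintype o] [DecidableEq l] [DecidableEq o] {A : Matrix m n R}
    {U : Matrix m l R} {V : Matrix n l R} {σ : l → R} (hV : Vᵀ * V = 1)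
    (hA : A = U * diagonal σ * Vᵀ)
    (e : o → l) : A * V.submatrix id e = U.submatrix id e * diagonal (σ ∘ e) := by
  have hAV : A * V = U * diagonal σ := by rw [hA, Matrix.mul_assoc, hV, Matrix.mul_one]
  rw [← submatrix_id_id A, ← submatrix_mul _ _ _ _ _ Function.bijective_id, hAV]
  ext i j
  simp [mul_diagonal]

theorem sq_mul_dotProduct_self_le_diagonal_mulVec {R : Type*} [CommRing R] [LinearOrder R]
    [IsStrictOrderedRing R] [Fintype l] [DecidableEq l] {s : R} {τ : l → R} (hs : 0 ≤ s)
    (hτ : ∀ j, s ≤ τ j) (d : l → R) :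
    s ^ 2 * (d ⬝ᵥ d) ≤ diagonal τ *ᵥ d ⬝ᵥ diagonal τ *ᵥ d := by
  simp only [dotProduct, mulVec_diagonal, Finset.mul_sum]
  refine Finset.sum_le_sum fun j _ => ?_
  calc s ^ 2 * (d j * d j) ≤ τ j ^ 2 * (d j * d j) :=
        mul_le_mul_of_nonneg_right (pow_le_pow_left₀ hs (hτ j) 2) (mul_self_nonneg _)
    _ = τ j * d j * (τ j * d j) := by ring

theorem norm_toLp_sq_eq_dotProduct [Fintype n] (v : n → ℝ) :
    ‖(WithLp.toLp 2 v : EuclideanSpace ℝ n)‖ ^ 2 = v ⬝ᵥ v := by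
  rw [← real_inner_self_eq_norm_sq, EuclideanSpace.inner_toLp_toLp, star_trivial]

theorem le_l2_opNorm_of_sq_mul_dotProduct_le [Fintype m] [Fintype n] [DecidableEq n]
    (M : Matrix m n ℝ) {x : n → ℝ} (hx : x ≠ 0) {s : ℝ} (hs : 0 ≤ s)
    (h : s ^ 2 * (x ⬝ᵥ x) ≤ M *ᵥ x ⬝ᵥ M *ᵥ x) : s ≤ ‖M‖ := by
  set y : EuclideanSpace ℝ n := WithLp.toLp 2 x
  have hy : 0 < ‖y‖ := by simpa [y] using hx
  have hMy : s * ‖y‖ ≤ ‖M‖ * ‖y‖ := by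
    refine le_trans ?_ (M.l2_opNorm_mulVec y)
    rw [← pow_le_pow_iff_left₀ (by positivity) (norm_nonneg _) two_ne_zero, mul_pow,
      norm_toLp_sq_eq_dotProduct]
    exact h.trans_eq (norm_toLp_sq_eq_dotProduct _).symm
  exact le_of_mul_le_mul_right hMy hy

end Matrix

theorem eckart_young_spectral_general {m n r : ℕ}
    (A : Matrix (Fin m) (Fin n) ℝ)
    (U : Matrix (Fin m) (Fin r) ℝ) (V : Matrix (Fin n) (Fin r) ℝ)
    (σ : Fin r → ℝ)
    (hU : Uᵀ * U = 1) (hV : Vᵀ * V = 1)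
    (hord : ∀ i j : Fin r, i ≤ j → σ j ≤ σ i) (hpos : ∀ j, 0 ≤ σ j)
    (hA : A = U * Matrix.diagonal σ * Vᵀ)
    (k : ℕ) (hk : k < r)
    (B : Matrix (Fin m) (Fin n) ℝ) (hB : B.rank ≤ k) :
    σ ⟨k, hk⟩ ≤ specNorm (A - B) := by
  set e : Fin (k + 1) → Fin r := Fin.castLE hk
  have he : Function.Injective e := Fin.castLE_injective hk
  obtain ⟨d, hd, hBd⟩ := (B * V.submatrix id e).exists_mulVec_eq_zero_of_rank_lt <|
    calc _ ≤ B.rank := rank_mul_le_left _ _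
      _ < _ := by simpa using Nat.lt_succ_of_le hB
  set x := V.submatrix id e *ᵥ d
  have hxx : x ⬝ᵥ x = d ⬝ᵥ d :=
    dotProduct_mulVec_self_of_transpose_mul_self_eq_one
      (transpose_mul_self_submatrix_eq_one hV he) d
  have hABx : (A - B) *ᵥ x = U.submatrix id e *ᵥ (diagonal (σ ∘ e) *ᵥ d) := by
    rw [sub_mulVec, mulVec_mulVec, mulVec_mulVec, hBd, sub_zero,
      mul_submatrix_eq_of_eq_mul_diagonal_mul_transpose hV hA, ← mulVec_mulVec]
  refine (A - B).le_l2_opNorm_of_sq_mul_dotProduct_le (x := x) ?_ (hpos _) ?_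
  · intro hx0
    rw [hx0, zero_dotProduct, eq_comm, dotProduct_self_eq_zero] at hxx
    exact hd hxx
  · rw [hABx, dotProduct_mulVec_self_of_transpose_mul_self_eq_one
      (transpose_mul_self_submatrix_eq_one hU he), hxx]
    exact sq_mul_dotProduct_self_le_diagonal_mulVec (hpos _)
      (fun j => hord _ _ (Fin.le_def.2 (Nat.le_of_lt_succ j.isLt))) d

/-- (Eckart–Young, spectral norm.)  Let `A = U Σ Vᵀ` be an SVD of the `m × n` real matrix
`A` with decreasingly ordered nonnegative singular values `σ_1 ≥ … ≥ σ_r`, `r = min m n`.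
For any `m × n` real matrix `B` of rank at most `k < r`, `‖A − B‖₂ ≥ σ_{k+1}`
(0-indexed: `σ k`). -/
theorem eckart_young_spectral {m n r : ℕ} (hr : r = min m n)
    (A : Matrix (Fin m) (Fin n) ℝ)
    (U : Matrix (Fin m) (Fin r) ℝ) (V : Matrix (Fin n) (Fin r) ℝ)
    (σ : Fin r → ℝ)
    (hU : Uᵀ * U = 1) (hV : Vᵀ * V = 1)
    (hord : ∀ i j : Fin r, i ≤ j → σ j ≤ σ i) (hpos : ∀ j, 0 ≤ σ j)
    (hA : A = U * Matrix.diagonal σ * Vᵀ)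
    (k : ℕ) (hk : k < r)
    (B : Matrix (Fin m) (Fin n) ℝ) (hB : B.rank ≤ k) :
    σ ⟨k, hk⟩ ≤ specNorm (A - B) :=
  eckart_young_spectral_general A U V σ hU hV hord hpos hA k hk B hB
end

section
/- (Eckart–Young, Frobenius norm) Let A be an m×n real matrix with singular values σ_1 ≥ … ≥ σ_r. For any m×n real matrix B of rank at most k < r, ‖A − B‖_F² ≥ Σ_{j=k+1}^r σ_j². -/
/-!
Let `C` have orthonormal columns spanning the column space of `B`, so that `P = C Cᵀ` is the
orthogonal projection onto it and `(1 - P) B = 0`. By Pythagoras,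
`‖A - B‖² ≥ ‖(1 - P) (A - B)‖² = ‖(1 - P) A‖² = ‖A‖² - ‖Cᵀ A‖²`.
For `A = U diag(σ) Vᵀ` this is `∑ σᵢ² - ∑ σᵢ² sᵢ` with `sᵢ = ‖Cᵀ uᵢ‖² ∈ [0, 1]` and, by Bessel,
`∑ sᵢ = ‖Uᵀ C‖² ≤ ‖C‖² = rank B ≤ k`. Under these constraints on the weights, `∑ σᵢ² sᵢ` is at most
the sum of the `k` largest `σᵢ²`.
-/

open Matrix

/-- The Frobenius norm of a real matrix. -/
noncomputable def frobNorm {m n : Type*} [Fintype m] [Fintype n]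
    (A : Matrix m n ℝ) : ℝ :=
  @norm _ Matrix.frobeniusNormedAddCommGroup.toNorm A

open Finset

lemma frobNorm_sq_eq_trace {m n : Type*} [Fintype m] [Fintype n] (X : Matrix m n ℝ) :
    frobNorm X ^ 2 = (Xᵀ * X).trace := by
  have hnonneg : 0 ≤ ∑ i, ∑ j, ‖X i j‖ ^ (2 : ℝ) := by positivity
  rw [frobNorm, frobenius_norm_def, ← Real.sqrt_eq_rpow, Real.sq_sqrt hnonneg, sum_comm]
  simp [trace, mul_apply, sq]

namespace Matrix

variable {l m n : Type*} [Fintype l] [Fintype m]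

lemma diag_transpose_mul_self_nonneg (X : Matrix m n ℝ) (j : n) : 0 ≤ (Xᵀ * X) j j :=
  sum_nonneg fun i _ => mul_self_nonneg (X i j)

lemma trace_transpose_mul_self_nonneg [Fintype n] (X : Matrix m n ℝ) : 0 ≤ (Xᵀ * X).trace :=
  sum_nonneg fun j _ => diag_transpose_mul_self_nonneg X j

section Orthonormal

variable [DecidableEq l] {C : Matrix m l ℝ}

lemma transpose_mul_self_eq_add_of_orthonormal (hC : Cᵀ * C = 1) (X : Matrix m n ℝ) :
    Xᵀ * X = (X - C * (Cᵀ * X))ᵀ * (X - C * (Cᵀ * X)) + (Cᵀ * X)ᵀ * (Cᵀ * X) := by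
  have hCC : Cᵀ * (C * (Cᵀ * X)) = Cᵀ * X := by rw [← Matrix.mul_assoc, hC, Matrix.one_mul]
  simp only [transpose_sub, transpose_mul, transpose_transpose, Matrix.sub_mul, Matrix.mul_sub,
    Matrix.mul_assoc, hCC]
  abel

lemma diag_transpose_mul_self_le_of_orthonormal (hC : Cᵀ * C = 1) (X : Matrix m n ℝ) (j : n) :
    ((Cᵀ * X)ᵀ * (Cᵀ * X)) j j ≤ (Xᵀ * X) j j := by
  rw [transpose_mul_self_eq_add_of_orthonormal hC X, add_apply]
  linarith [diag_transpose_mul_self_nonneg (X - C * (Cᵀ * X)) j]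

lemma trace_transpose_mul_self_le_of_orthonormal [Fintype n] (hC : Cᵀ * C = 1)
    (X : Matrix m n ℝ) : ((Cᵀ * X)ᵀ * (Cᵀ * X)).trace ≤ (Xᵀ * X).trace :=
  sum_le_sum fun j _ => diag_transpose_mul_self_le_of_orthonormal hC X j

lemma trace_transpose_mul_self_le_card_of_orthonormal [Fintype n] [DecidableEq n]
    {U : Matrix m n ℝ} (hU : Uᵀ * U = 1) (hC : Cᵀ * C = 1) :
    ((Cᵀ * U)ᵀ * (Cᵀ * U)).trace ≤ Fintype.card l := calc
  ((Cᵀ * U)ᵀ * (Cᵀ * U)).trace = ((Uᵀ * C)ᵀ * (Uᵀ * C)).trace := by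
    rw [trace_mul_comm]; simp only [transpose_mul, transpose_transpose]
  _ ≤ (Cᵀ * C).trace := trace_transpose_mul_self_le_of_orthonormal hU C
  _ = Fintype.card l := by simp [hC]

lemma trace_sub_le_of_orthonormal [Fintype n] (hC : Cᵀ * C = 1) {B : Matrix m n ℝ}
    (hCB : C * (Cᵀ * B) = B) (A : Matrix m n ℝ) :
    (Aᵀ * A).trace - ((Cᵀ * A)ᵀ * (Cᵀ * A)).trace ≤ ((A - B)ᵀ * (A - B)).trace := by
  have hres : A - B - C * (Cᵀ * (A - B)) = A - C * (Cᵀ * A) := by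
    rw [Matrix.mul_sub, Matrix.mul_sub, hCB]; abel
  rw [transpose_mul_self_eq_add_of_orthonormal hC A,
    transpose_mul_self_eq_add_of_orthonormal hC (A - B), hres, trace_add, trace_add]
  linarith [trace_transpose_mul_self_nonneg (Cᵀ * (A - B))]

end Orthonormal

lemma trace_transpose_mul_self_mul_diagonal_mul_transpose [Fintype n] [DecidableEq l]
    {V : Matrix n l ℝ} (hV : Vᵀ * V = 1) (X : Matrix m l ℝ) (σ : l → ℝ) :
    ((X * diagonal σ * Vᵀ)ᵀ * (X * diagonal σ * Vᵀ)).trace = ∑ i, σ i ^ 2 * (Xᵀ * X) i i := by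
  have : (X * diagonal σ * Vᵀ)ᵀ * (X * diagonal σ * Vᵀ) =
      V * (diagonal σ * (Xᵀ * X) * diagonal σ) * Vᵀ := by
    simp only [transpose_mul, transpose_transpose, diagonal_transpose, Matrix.mul_assoc]
  rw [this, trace_mul_comm, ← Matrix.mul_assoc, hV, Matrix.one_mul]
  simp only [trace, diag, diagonal_mul, mul_diagonal]
  exact sum_congr rfl fun i _ => by ring

end Matrix

def Matrix.ofCols {m ι : Type*} (v : ι → EuclideanSpace ℝ m) : Matrix m ι ℝ :=
  of fun i b => v b i

section OrthonormalColumns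

variable {m : Type*} [Fintype m]

lemma Orthonormal.transpose_ofCols_mul_ofCols {ι : Type*} [DecidableEq ι]
    {v : ι → EuclideanSpace ℝ m} (hv : Orthonormal ℝ v) : (ofCols v)ᵀ * ofCols v = 1 := by
  ext b b'
  rw [one_apply, ← (orthonormal_iff_ite.1 hv) b b', PiLp.inner_apply]
  simp [ofCols, mul_apply, mul_comm]

lemma OrthonormalBasis.ofCols_mulVec_transpose_mulVec {ι : Type*} [Fintype ι]
    {W : Submodule ℝ (EuclideanSpace ℝ m)} (b : OrthonormalBasis ι ℝ W) (y : W) :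
    ofCols (fun j => (b j : EuclideanSpace ℝ m)) *ᵥ
      ((ofCols fun j => (b j : EuclideanSpace ℝ m))ᵀ *ᵥ (y : EuclideanSpace ℝ m)) =
      (y : EuclideanSpace ℝ m) := by
  conv_rhs => rw [← b.sum_repr' y]
  ext i
  simp [ofCols, mulVec, dotProduct, Submodule.coe_inner, PiLp.inner_apply, mul_comm]

lemma Matrix.exists_orthonormal_cols_mul_transpose_mul_eq_self {n : Type*} [Fintype n]
    (B : Matrix m n ℝ) : ∃ C : Matrix m (Fin B.rank) ℝ, Cᵀ * C = 1 ∧ C * (Cᵀ * B) = B := by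
  classical
  let W : Submodule ℝ (EuclideanSpace ℝ m) :=
    (LinearMap.range B.mulVecLin).map (WithLp.linearEquiv 2 ℝ (m → ℝ)).symm.toLinearMap
  let b : OrthonormalBasis (Fin B.rank) ℝ W :=
    (stdOrthonormalBasis ℝ W).reindex (finCongr (LinearEquiv.finrank_map_eq _ _))
  refine ⟨ofCols fun j => (b j : EuclideanSpace ℝ m), ?_, ?_⟩
  · exact (b.orthonormal.comp_linearIsometry W.subtypeₗᵢ).transpose_ofCols_mul_ofCols
  · refine ext_of_mulVec_single fun j => ?_
    rw [← mulVec_mulVec, ← mulVec_mulVec]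
    exact b.ofCols_mulVec_transpose_mulVec ⟨_, Submodule.mem_map_of_mem ⟨Pi.single j 1, rfl⟩⟩

end OrthonormalColumns

lemma Finset.sum_mul_le_sum_of_threshold {ι : Type*} [Fintype ι] {T : Finset ι} {a s : ι → ℝ}
    {t : ℝ} (ht : 0 ≤ t) (haT : ∀ i ∈ T, t ≤ a i) (haTc : ∀ i ∉ T, a i ≤ t)
    (hs0 : ∀ i, 0 ≤ s i) (hs1 : ∀ i, s i ≤ 1) (hsum : ∑ i, s i ≤ #T) :
    ∑ i, a i * s i ≤ ∑ i ∈ T, a i := by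
  classical
  have hshift : ∑ i, (a i - t) * s i ≤ ∑ i ∈ T, (a i - t) := by
    rw [← sum_add_sum_compl T]
    have hout : ∑ i ∈ Tᶜ, (a i - t) * s i ≤ 0 :=
      sum_nonpos fun i hi => mul_nonpos_of_nonpos_of_nonneg
        (by linarith [haTc i (mem_compl.1 hi)]) (hs0 i)
    have hin : ∑ i ∈ T, (a i - t) * s i ≤ ∑ i ∈ T, (a i - t) :=
      sum_le_sum fun i hi => mul_le_of_le_one_right (by linarith [haT i hi]) (hs1 i)
    linarith
  have hexp : ∑ i, a i * s i = ∑ i, (a i - t) * s i + t * ∑ i, s i := by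
    rw [mul_sum, ← sum_add_distrib]; exact sum_congr rfl fun i _ => by ring
  rw [sum_sub_distrib, sum_const, nsmul_eq_mul] at hshift
  nlinarith

theorem eckart_young_frobenius_general {m n r : ℕ}
    (A : Matrix (Fin m) (Fin n) ℝ)
    (U : Matrix (Fin m) (Fin r) ℝ) (V : Matrix (Fin n) (Fin r) ℝ)
    (σ : Fin r → ℝ)
    (hU : Uᵀ * U = 1) (hV : Vᵀ * V = 1)
    (hord : ∀ i j : Fin r, i ≤ j → σ j ≤ σ i) (hpos : ∀ j, 0 ≤ σ j)
    (hA : A = U * Matrix.diagonal σ * Vᵀ)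
    (k : ℕ) (hk : k < r)
    (B : Matrix (Fin m) (Fin n) ℝ) (hB : B.rank ≤ k) :
    (∑ j : Fin r, if k ≤ (j : ℕ) then σ j ^ 2 else 0) ≤ frobNorm (A - B) ^ 2 := by
  subst hA
  obtain ⟨C, hC, hCB⟩ := B.exists_orthonormal_cols_mul_transpose_mul_eq_self
  set T : Finset (Fin r) := {i | (i : ℕ) < k}
  have hT : ∀ i, i ∈ T ↔ (i : ℕ) < k := fun i => by simp [T]
  set s : Fin r → ℝ := fun i => ((Cᵀ * U)ᵀ * (Cᵀ * U)) i i
  have hs_sum : ∑ i, s i ≤ #T := calc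
    ∑ i, s i ≤ B.rank :=
      (trace_transpose_mul_self_le_card_of_orthonormal hU hC).trans_eq (by rw [Fintype.card_fin])
    _ ≤ #T := by rw [Fin.card_filter_val_lt, min_eq_right hk.le]; exact_mod_cast hB
  have h_top : ∑ i, σ i ^ 2 * s i ≤ ∑ i ∈ T, σ i ^ 2 :=
    sum_mul_le_sum_of_threshold (t := σ ⟨k, hk⟩ ^ 2) (sq_nonneg _)
      (fun i hi => pow_le_pow_left₀ (hpos _) (hord i _ (Fin.le_def.2 ((hT i).1 hi).le)) 2)
      (fun i hi =>
        pow_le_pow_left₀ (hpos _) (hord _ i (Fin.le_def.2 (not_lt.1 (mt (hT i).2 hi)))) 2)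
      (fun i => diag_transpose_mul_self_nonneg _ i)
      (fun i => by simpa only [hU, one_apply_eq] using
        diag_transpose_mul_self_le_of_orthonormal hC U i) hs_sum
  have h_split : (∑ j : Fin r, if k ≤ (j : ℕ) then σ j ^ 2 else 0) + ∑ j ∈ T, σ j ^ 2 =
      ∑ j, σ j ^ 2 := by
    rw [← sum_filter]; simp_rw [T, ← not_lt]; exact sum_filter_not_add_sum_filter _ _ _
  have h_proj : ∑ i, σ i ^ 2 - ∑ i, σ i ^ 2 * s i ≤ frobNorm (U * diagonal σ * Vᵀ - B) ^ 2 := by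
    have h := trace_sub_le_of_orthonormal hC hCB (U * diagonal σ * Vᵀ)
    rw [show Cᵀ * (U * diagonal σ * Vᵀ) = Cᵀ * U * diagonal σ * Vᵀ by simp only [Matrix.mul_assoc],
      trace_transpose_mul_self_mul_diagonal_mul_transpose hV,
      trace_transpose_mul_self_mul_diagonal_mul_transpose hV, hU] at h
    simpa only [one_apply_eq, mul_one, frobNorm_sq_eq_trace] using h
  linarith

/-- (Eckart–Young, Frobenius norm.)  Let `A = U Σ Vᵀ` be an SVD of the `m × n` real matrix
`A` with decreasingly ordered nonnegative singular values `σ_1 ≥ … ≥ σ_r`, `r = min m n`.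
For any `m × n` real matrix `B` of rank at most `k < r`,
`‖A − B‖_F² ≥ Σ_{j=k+1}^r σ_j²` (0-indexed: the sum over `j ≥ k`). -/
theorem eckart_young_frobenius {m n r : ℕ} (hr : r = min m n)
    (A : Matrix (Fin m) (Fin n) ℝ)
    (U : Matrix (Fin m) (Fin r) ℝ) (V : Matrix (Fin n) (Fin r) ℝ)
    (σ : Fin r → ℝ)
    (hU : Uᵀ * U = 1) (hV : Vᵀ * V = 1)
    (hord : ∀ i j : Fin r, i ≤ j → σ j ≤ σ i) (hpos : ∀ j, 0 ≤ σ j)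
    (hA : A = U * Matrix.diagonal σ * Vᵀ)
    (k : ℕ) (hk : k < r)
    (B : Matrix (Fin m) (Fin n) ℝ) (hB : B.rank ≤ k) :
    (∑ j : Fin r, if k ≤ (j : ℕ) then σ j ^ 2 else 0) ≤ frobNorm (A - B) ^ 2 :=
  eckart_young_frobenius_general A U V σ hU hV hord hpos hA k hk B hB
end

section
/- Let A be an m×n real matrix, Q an m×ℓ matrix with orthonormal columns, and B = Qᵀ A. Let Bᵀ = Q̂ R̂ be a compact QR factorization and R̂ = Û Σ̂ V̂ᵀ an SVD of the ℓ×ℓ matrix R̂. Then Q Qᵀ A = (Q V̂) Σ̂ (Q̂ Û)ᵀ, and both Q V̂ and Q̂ Û have orthonormal columns; i.e., this yields an SVD of Q Qᵀ A. -/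
open Matrix

namespace Matrix

theorem transpose_mul_self_mul_eq_one {R k l m : Type*} [CommSemiring R] [Fintype l] [Fintype m]
    [DecidableEq k] [DecidableEq l] {P : Matrix m l R} {W : Matrix l k R}
    (hP : Pᵀ * P = 1) (hW : Wᵀ * W = 1) : (P * W)ᵀ * (P * W) = 1 := by
  rw [transpose_mul, Matrix.mul_assoc, ← Matrix.mul_assoc Pᵀ, hP, Matrix.one_mul, hW]

theorem transpose_mul_diagonal_mul_transpose {R k l m : Type*} [CommSemiring R] [Fintype l]
    [DecidableEq l]
    (U : Matrix k l R) (σ : l → R) (V : Matrix m l R) :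
    (U * diagonal σ * Vᵀ)ᵀ = V * diagonal σ * Uᵀ := by
  simp only [transpose_mul, transpose_transpose, diagonal_transpose, Matrix.mul_assoc]

end Matrix

theorem svd_via_qr_of_Bt_general {m n ℓ : ℕ}
    (A : Matrix (Fin m) (Fin n) ℝ)
    (Q : Matrix (Fin m) (Fin ℓ) ℝ) (hQ : Qᵀ * Q = 1)
    (B : Matrix (Fin ℓ) (Fin n) ℝ) (hB : B = Qᵀ * A)
    (Qh : Matrix (Fin n) (Fin ℓ) ℝ) (Rh : Matrix (Fin ℓ) (Fin ℓ) ℝ)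
    (hQh : Qhᵀ * Qh = 1) (hQR : Bᵀ = Qh * Rh)
    (Uh Vh : Matrix (Fin ℓ) (Fin ℓ) ℝ) (σ : Fin ℓ → ℝ)
    (hUh : Uhᵀ * Uh = 1)
    (hVh : Vhᵀ * Vh = 1)
    (hSVD : Rh = Uh * Matrix.diagonal σ * Vhᵀ) :
    Q * Qᵀ * A = (Q * Vh) * Matrix.diagonal σ * (Qh * Uh)ᵀ ∧
      (Q * Vh)ᵀ * (Q * Vh) = 1 ∧ (Qh * Uh)ᵀ * (Qh * Uh) = 1 := by
  have hB' : B = Rhᵀ * Qhᵀ := by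
    rw [← transpose_mul, ← hQR, transpose_transpose]
  refine ⟨?_, transpose_mul_self_mul_eq_one hQ hVh, transpose_mul_self_mul_eq_one hQh hUh⟩
  calc Q * Qᵀ * A = Q * (Rhᵀ * Qhᵀ) := by rw [Matrix.mul_assoc, ← hB, hB']
    _ = (Q * Vh) * diagonal σ * (Qh * Uh)ᵀ := by
      rw [hSVD, transpose_mul_diagonal_mul_transpose, transpose_mul]
      simp only [Matrix.mul_assoc]

/-- Let `A` be `m × n`, `Q` an `m × ℓ` matrix with orthonormal columns, `B = Qᵀ A`.
If `Bᵀ = Q̂ R̂` is a compact QR factorization and `R̂ = Û Σ̂ V̂ᵀ` is an SVD of the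
`ℓ × ℓ` matrix `R̂`, then `Q Qᵀ A = (Q V̂) Σ̂ (Q̂ Û)ᵀ`, where `Q V̂` and `Q̂ Û` have
orthonormal columns; i.e., this yields an SVD of `Q Qᵀ A`. -/
theorem svd_via_qr_of_Bt {m n ℓ : ℕ}
    (A : Matrix (Fin m) (Fin n) ℝ)
    (Q : Matrix (Fin m) (Fin ℓ) ℝ) (hQ : Qᵀ * Q = 1)
    (B : Matrix (Fin ℓ) (Fin n) ℝ) (hB : B = Qᵀ * A)
    (Qh : Matrix (Fin n) (Fin ℓ) ℝ) (Rh : Matrix (Fin ℓ) (Fin ℓ) ℝ)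
    (hQh : Qhᵀ * Qh = 1) (hQR : Bᵀ = Qh * Rh)
    (hRtri : Rh.BlockTriangular id)
    (Uh Vh : Matrix (Fin ℓ) (Fin ℓ) ℝ) (σ : Fin ℓ → ℝ)
    (hUh : Uhᵀ * Uh = 1) (hUh' : Uh * Uhᵀ = 1)
    (hVh : Vhᵀ * Vh = 1) (hVh' : Vh * Vhᵀ = 1)
    (hσ : ∀ j, 0 ≤ σ j)
    (hSVD : Rh = Uh * Matrix.diagonal σ * Vhᵀ) :
    Q * Qᵀ * A = (Q * Vh) * Matrix.diagonal σ * (Qh * Uh)ᵀ ∧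
      (Q * Vh)ᵀ * (Q * Vh) = 1 ∧ (Qh * Uh)ᵀ * (Qh * Uh) = 1 :=
  svd_via_qr_of_Bt_general A Q hQ B hB Qh Rh hQh hQR Uh Vh σ hUh hVh hSVD
end

section
/- Let A be an m×n real matrix of exact rank k, and let Ω be an n×k matrix such that VᵀΩ is invertible, where V is the n×k matrix of right singular vectors of A associated with its k nonzero singular values. Let Q be an orthonormal basis for the range of Y = A Ω. Then Q Qᵀ A = A. -/
/-!
Since `Σ Vᵀ Ω` is invertible, `Y = A Ω = U (Σ Vᵀ Ω)` has the same range as `U`, which contains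
the range of `A = U (Σ Vᵀ)`. Orthonormality of the columns of `Q` makes `Q Qᵀ` the identity on
`range Q = range Y`, hence on the columns of `A`.
-/

open Matrix

namespace Matrix

variable {l m n R : Type*} [Fintype m] [Semiring R]

theorem range_mulVec_mul_subset [Fintype n] (A : Matrix l m R) (B : Matrix m n R) :
    Set.range (A * B).mulVec ⊆ Set.range A.mulVec := by
  rintro _ ⟨v, rfl⟩
  exact ⟨B *ᵥ v, mulVec_mulVec v A B⟩

theorem range_mulVec_mul_of_isUnit [DecidableEq m] (A : Matrix l m R) {M : Matrix m m R}
    (hM : IsUnit M) : Set.range (A * M).mulVec = Set.range A.mulVec := by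
  have hsurj : Function.Surjective M.mulVec :=
    mulVec_surjective_iff_exists_right_inverse.2 hM.exists_right_inv
  rw [← hsurj.range_comp A.mulVec]
  congr 1
  funext v
  exact (mulVec_mulVec v A M).symm

theorem mul_transpose_mul_eq_self_of_range_subset [Fintype l] [Fintype n] [DecidableEq m]
    {Q : Matrix l m R} {B : Matrix l n R}
    (hQ : Qᵀ * Q = 1) (hB : Set.range B.mulVec ⊆ Set.range Q.mulVec) :
    Q * Qᵀ * B = B := by
  refine ext_iff_mulVec.2 fun v => ?_
  obtain ⟨c, hc⟩ := hB ⟨v, rfl⟩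
  rw [← mulVec_mulVec, ← hc, mulVec_mulVec, Matrix.mul_assoc, hQ, Matrix.mul_one]

end Matrix

theorem sampling_captures_range_of_exact_rank_general {m n k : ℕ}
    (A : Matrix (Fin m) (Fin n) ℝ)
    (U : Matrix (Fin m) (Fin k) ℝ) (V : Matrix (Fin n) (Fin k) ℝ)
    (σ : Fin k → ℝ)
    (hσ : ∀ j, σ j ≠ 0)
    (hA : A = U * Matrix.diagonal σ * Vᵀ)
    (Ω : Matrix (Fin n) (Fin k) ℝ) (hΩ : IsUnit (Vᵀ * Ω))
    (Q : Matrix (Fin m) (Fin k) ℝ) (hQ : Qᵀ * Q = 1)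
    (hrange : Set.range Q.mulVec = Set.range (A * Ω).mulVec) :
    Q * Qᵀ * A = A := by
  have hM : IsUnit (diagonal σ * (Vᵀ * Ω)) :=
    (isUnit_diagonal.2 (Pi.isUnit_iff.2 fun j => (hσ j).isUnit)).mul hΩ
  have hY : A * Ω = U * (diagonal σ * (Vᵀ * Ω)) := by
    rw [hA]
    simp only [Matrix.mul_assoc]
  apply mul_transpose_mul_eq_self_of_range_subset hQ
  rw [hrange, hY, range_mulVec_mul_of_isUnit U hM, hA, Matrix.mul_assoc]
  exact range_mulVec_mul_subset U _

/-- If `A` is an `m × n` matrix of exact rank `k` with SVD `A = U Σ Vᵀ` (with `Σ` a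
`k × k` invertible diagonal matrix), and `Ω` is an `n × k` matrix such that `Vᵀ Ω` is
invertible, then for any orthonormal `Q` whose range equals the range of `Y = A Ω`,
we have `Q Qᵀ A = A`. -/
theorem sampling_captures_range_of_exact_rank {m n k : ℕ}
    (A : Matrix (Fin m) (Fin n) ℝ)
    (U : Matrix (Fin m) (Fin k) ℝ) (V : Matrix (Fin n) (Fin k) ℝ)
    (σ : Fin k → ℝ)
    (hU : Uᵀ * U = 1) (hV : Vᵀ * V = 1) (hσ : ∀ j, σ j ≠ 0)
    (hA : A = U * Matrix.diagonal σ * Vᵀ)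
    (hrank : A.rank = k)
    (Ω : Matrix (Fin n) (Fin k) ℝ) (hΩ : IsUnit (Vᵀ * Ω))
    (Q : Matrix (Fin m) (Fin k) ℝ) (hQ : Qᵀ * Q = 1)
    (hrange : Set.range Q.mulVec = Set.range (A * Ω).mulVec) :
    Q * Qᵀ * A = A :=
  sampling_captures_range_of_exact_rank_general A U V σ hσ hA Ω hΩ Q hQ hrange
end
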